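/- Let f : {−1,1}^n → {−1,1}, let δ ∈ [0,1], let π be a restriction fixing |π| coordinates, and let i ∈ {1,…,n} be a coordinate not fixed by π. Then |Inf_i((f_π)_δ) − Inf_i((f_δ)_π)| ≤ 2δ·|π|, where influences of real-valued functions are taken with respect to the absolute-value metric. -/
import Mathlib


/-!
Noise smoothing and restrictions of boolean functions on {-1,1}^n; a point of the cube is
encoded as `x : Fin n → Bool` (`true` encodes 1, `false` encodes -1). A restriction is
encoded as `π : Fin n → Option Bool`, where `π j = some b` fixes coordinate `j` to `b`.
-/

/-- The ±1 real value encoded by a boolean: `true ↦ 1`, `false ↦ -1`. -/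
noncomputable def bval (b : Bool) : ℝ := if b then 1 else -1

/-- The `δ`-smoothed version of `g`: `g_δ(x) = E[g(x̃)]`, where `x̃` is obtained from `x`
by flipping each coordinate independently with probability `δ/2` (equivalently,
rerandomizing each coordinate independently with probability `δ`). -/
noncomputable def smooth {n : ℕ} (δ : ℝ) (g : (Fin n → Bool) → ℝ) (x : Fin n → Bool) : ℝ :=
  ∑ y : Fin n → Bool, (∏ i : Fin n, if y i = x i then 1 - δ / 2 else δ / 2) * g y

/-- Apply a restriction: coordinates fixed by `π` are overridden, the rest are read from `x`.
Thus `g ∘ applyR π` is the restricted function `g_π`, viewed as a function of all `n`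
variables that ignores the fixed coordinates. -/
def applyR {n : ℕ} (π : Fin n → Option Bool) (x : Fin n → Bool) : Fin n → Bool :=
  fun j => (π j).getD (x j)

/-- `|π|`: the number of coordinates fixed by the restriction `π`. -/
def rsize {n : ℕ} (π : Fin n → Option Bool) : ℕ :=
  (Finset.univ.filter fun j => (π j).isSome).card

/-- The influence of variable `i` on a real-valued `u`, with respect to the absolute-value
metric: `Inf_i(u) = E_x[|u(x) − u(x^{~i})|]`, where `x` is uniform and `x^{~i}` is `x` with
its `i`-th coordinate rerandomized. -/
noncomputable def inflR {n : ℕ} (u : (Fin n → Bool) → ℝ) (i : Fin n) : ℝ :=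
  (∑ x : Fin n → Bool,
      (|u x - u (Function.update x i true)| +
        |u x - u (Function.update x i false)|) / 2) / 2 ^ n

lemma sum_prod_cube {n : ℕ} (F : Fin n → Bool → ℝ) :
    ∑ y : Fin n → Bool, ∏ j, F j (y j) = ∏ j, (F j true + F j false) := by
  rw [show (∏ j, (F j true + F j false)) = ∏ j, ∑ b, F j b by
    refine Finset.prod_congr rfl fun j _ => ?_
    simp [Fintype.sum_bool, add_comm]]
  rw [Fintype.prod_sum]

section W
variable {n : ℕ} (δ : ℝ)

noncomputable def wgt (a b : Bool) : ℝ := if a = b then 1 - δ / 2 else δ / 2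

lemma smooth_eq (g : (Fin n → Bool) → ℝ) (x : Fin n → Bool) :
    smooth δ g x = ∑ y : Fin n → Bool, (∏ j, wgt δ (y j) (x j)) * g y := rfl

lemma wgt_total (c : Bool) : wgt δ true c + wgt δ false c = 1 := by
  cases c <;> simp [wgt]

lemma wgt_nonneg (h0 : 0 ≤ δ) (h1 : δ ≤ 1) (a b : Bool) : 0 ≤ wgt δ a b := by
  unfold wgt; split <;> nlinarith

-- flipping coordinate j
lemma flip_invol {n : ℕ} (j : Fin n) :
    Function.Involutive (fun y : Fin n → Bool => Function.update y j (!(y j))) := by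
  intro y
  simp [Function.update_idem]

-- smooth of a function ignoring coordinate j doesn't depend on coordinate j of input
lemma smooth_ignores (j : Fin n) (G : (Fin n → Bool) → ℝ)
    (hG : ∀ y c, G (Function.update y j c) = G y) (x : Fin n → Bool) (b : Bool) :
    smooth δ G x = smooth δ G (Function.update x j b) := by
  have key : ∀ x' : Fin n → Bool,
      2 * smooth δ G x' = ∑ y : Fin n → Bool,
        (∏ k ∈ Finset.univ.erase j, wgt δ (y k) (x' k)) * G y := by
    intro x'
    have reindex : ∑ y : Fin n → Bool, (∏ k, wgt δ (y k) (x' k)) * G y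
        = ∑ y : Fin n → Bool,
            (∏ k, wgt δ ((Function.update y j (!(y j))) k) (x' k)) * G y := by
      rw [← Function.Bijective.sum_comp ((flip_invol j).bijective)
        (fun y => (∏ k, wgt δ (y k) (x' k)) * G y)]
      refine Finset.sum_congr rfl fun y _ => ?_
      simp only [hG]
    rw [smooth_eq, two_mul]
    nth_rewrite 2 [reindex]
    rw [← Finset.sum_add_distrib]
    refine Finset.sum_congr rfl fun y _ => ?_
    rw [← add_mul]
    congr 1
    rw [← Finset.mul_prod_erase Finset.univ _ (Finset.mem_univ j),
        ← Finset.mul_prod_erase Finset.univ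
          (fun k => wgt δ ((Function.update y j (!(y j))) k) (x' k)) (Finset.mem_univ j)]
    have : (∏ k ∈ Finset.univ.erase j, wgt δ ((Function.update y j (!(y j))) k) (x' k))
        = ∏ k ∈ Finset.univ.erase j, wgt δ (y k) (x' k) := by
      refine Finset.prod_congr rfl fun k hk => ?_
      rw [Function.update_of_ne (Finset.mem_erase.1 hk).1]
    rw [this, Function.update_self, ← add_mul]
    have : wgt δ (y j) (x' j) + wgt δ (!(y j)) (x' j) = 1 := by
      cases hyj : y j <;> simpa [hyj, add_comm] using wgt_total δ (x' j)
    rw [this, one_mul]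
  have h2 : (2 : ℝ) * smooth δ G x = 2 * smooth δ G (Function.update x j b) := by
    rw [key, key]
    refine Finset.sum_congr rfl fun y _ => ?_
    congr 1
    refine Finset.prod_congr rfl fun k hk => ?_
    rw [Function.update_of_ne (Finset.mem_erase.1 hk).1]
  linarith

-- single coordinate swap lemma
lemma single_coord (h0 : 0 ≤ δ) (h1 : δ ≤ 1) (h : (Fin n → Bool) → ℝ)
    (hh : ∀ y, |h y| ≤ 1) (j : Fin n) (b : Bool) (x : Fin n → Bool) :
    |smooth δ (fun z => h (Function.update z j b)) x
      - smooth δ h (Function.update x j b)| ≤ δ := by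
  set x' := Function.update x j b with hx'
  have hG : ∀ y c, (fun z => h (Function.update z j b)) (Function.update y j c)
      = (fun z => h (Function.update z j b)) y := by
    intro y c; simp [Function.update_idem]
  rw [smooth_ignores δ j _ hG x b, ← hx']
  have hx'j : x' j = b := Function.update_self j b x
  rw [smooth_eq, smooth_eq, ← Finset.sum_sub_distrib]
  have step1 : |∑ y : Fin n → Bool,
      ((∏ k, wgt δ (y k) (x' k)) * h (Function.update y j b)
        - (∏ k, wgt δ (y k) (x' k)) * h y)|
      ≤ ∑ y : Fin n → Bool, ∏ k, (fun k c => if k = j then (if c = b then 0 else δ)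
          else wgt δ c (x' k) : Fin n → Bool → ℝ) k (y k) := by
    refine (Finset.abs_sum_le_sum_abs _ _).trans (Finset.sum_le_sum fun y _ => ?_)
    rw [← mul_sub, abs_mul]
    by_cases hyj : y j = b
    · have : Function.update y j b = y := by
        rw [← hyj]; exact Function.update_eq_self j y
      rw [this, sub_self, abs_zero, mul_zero]
      refine Finset.prod_nonneg fun k _ => ?_
      by_cases hk : k = j
      · subst hk; simp [hyj]
      · simp only [hk, if_false]; exact wgt_nonneg δ h0 h1 _ _
    · have habs : |(∏ k, wgt δ (y k) (x' k))| = ∏ k, wgt δ (y k) (x' k) :=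
        abs_of_nonneg (Finset.prod_nonneg fun k _ => wgt_nonneg δ h0 h1 _ _)
      rw [habs]
      have hsplit : (∏ k, wgt δ (y k) (x' k))
          = wgt δ (y j) (x' j) * ∏ k ∈ Finset.univ.erase j, wgt δ (y k) (x' k) :=
        (Finset.mul_prod_erase Finset.univ _ (Finset.mem_univ j)).symm
      have hsplit2 : (∏ k, (fun k c => if k = j then (if c = b then 0 else δ)
            else wgt δ c (x' k) : Fin n → Bool → ℝ) k (y k))
          = δ * ∏ k ∈ Finset.univ.erase j, wgt δ (y k) (x' k) := by
        rw [← Finset.mul_prod_erase Finset.univ _ (Finset.mem_univ j)]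
        congr 1
        · simp [hyj]
        · refine Finset.prod_congr rfl fun k hk => ?_
          simp [(Finset.mem_erase.1 hk).1]
      rw [hsplit, hsplit2]
      have hwj : wgt δ (y j) (x' j) = δ / 2 := by
        rw [hx'j]; simp [wgt, hyj]
      rw [hwj]
      have hd : |h (Function.update y j b) - h y| ≤ 2 := by
        have := hh (Function.update y j b); have := hh y
        rw [abs_le] at *; constructor <;> nlinarith [abs_le.1 (hh (Function.update y j b)), abs_le.1 (hh y)]
      have hP : (0:ℝ) ≤ ∏ k ∈ Finset.univ.erase j, wgt δ (y k) (x' k) :=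
        Finset.prod_nonneg fun k _ => wgt_nonneg δ h0 h1 _ _
      calc δ / 2 * (∏ k ∈ Finset.univ.erase j, wgt δ (y k) (x' k))
            * |h (Function.update y j b) - h y|
          ≤ δ / 2 * (∏ k ∈ Finset.univ.erase j, wgt δ (y k) (x' k)) * 2 := by
            refine mul_le_mul_of_nonneg_left hd ?_
            positivity
        _ = δ * ∏ k ∈ Finset.univ.erase j, wgt δ (y k) (x' k) := by ring
  refine step1.trans ?_
  have hfact := sum_prod_cube (fun k c => if k = j then (if c = b then 0 else δ)
      else wgt δ c (x' k))
  refine le_of_le_of_eq (le_of_eq hfact) ?_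
  have : ∀ k : Fin n, ((fun k c => if k = j then (if c = b then 0 else δ)
        else wgt δ c (x' k) : Fin n → Bool → ℝ) k true
      + (fun k c => if k = j then (if c = b then 0 else δ)
        else wgt δ c (x' k) : Fin n → Bool → ℝ) k false)
      = if k = j then δ else 1 := by
    intro k
    by_cases hk : k = j
    · subst hk; cases b <;> simp
    · simp only [hk, if_false]; exact wgt_total δ _
  rw [Finset.prod_congr rfl (fun k _ => this k)]
  simp

-- pointwise comparison lemma
lemma pointwise_aux (h0 : 0 ≤ δ) (h1 : δ ≤ 1) (m : ℕ) :
    ∀ (π : Fin n → Option Bool), rsize π = m →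
    ∀ (h : (Fin n → Bool) → ℝ), (∀ y, |h y| ≤ 1) → ∀ x : Fin n → Bool,
    |smooth δ (fun z => h (applyR π z)) x - smooth δ h (applyR π x)| ≤ δ * m := by
  induction m with
  | zero =>
    intro π hπ h hh x
    have hnone : ∀ j, π j = none := by
      intro j
      by_contra hj
      have hcard : j ∈ Finset.univ.filter fun j => (π j).isSome := by
        simp [Option.isSome_iff_ne_none, hj]
      have := Finset.card_pos.2 ⟨j, hcard⟩
      rw [show (Finset.univ.filter fun j => (π j).isSome).card = rsize π from rfl, hπ] at this
      exact absurd this (by simp)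
    have : applyR π = id := by
      funext x j; simp [applyR, hnone j]
    simp [this]
  | succ m ih =>
    intro π hπ h hh x
    -- find a fixed coordinate
    have hne : (Finset.univ.filter fun j => (π j).isSome).Nonempty := by
      rw [← Finset.card_pos, show (Finset.univ.filter fun j => (π j).isSome).card
        = rsize π from rfl, hπ]; omega
    obtain ⟨j, hj⟩ := hne
    have hjs : (π j).isSome := (Finset.mem_filter.1 hj).2
    obtain ⟨b, hb⟩ := Option.isSome_iff_exists.1 hjs
    set π' := Function.update π j none with hπ'
    have hsize : rsize π' = m := by
      have hf : (Finset.univ.filter fun k => (π' k).isSome)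
          = (Finset.univ.filter fun k => (π k).isSome).erase j := by
        ext k
        simp only [Finset.mem_filter, Finset.mem_erase, Finset.mem_univ, true_and]
        constructor
        · intro hk
          have hkj : k ≠ j := by
            intro he; subst he; rw [hπ', Function.update_self] at hk; simp at hk
          rw [hπ', Function.update_of_ne hkj] at hk
          exact ⟨hkj, hk⟩
        · intro ⟨hkj, hk⟩
          rw [hπ', Function.update_of_ne hkj]; exact hk
      rw [show rsize π' = (Finset.univ.filter fun k => (π' k).isSome).card from rfl, hf,
        Finset.card_erase_of_mem hj, show (Finset.univ.filter fun j => (π j).isSome).card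
        = rsize π from rfl, hπ]
      omega
    have happ : ∀ z : Fin n → Bool, applyR π z = applyR π' (Function.update z j b) := by
      intro z; funext k
      by_cases hk : k = j
      · subst hk
        simp [applyR, hπ', hb]
      · simp [applyR, hπ', Function.update_of_ne hk, Function.update_of_ne hk]
    have hh' : ∀ y, |(fun z => h (applyR π' z)) y| ≤ 1 := fun y => hh _
    have e1 : (fun z => h (applyR π z))
        = fun z => (fun w => h (applyR π' w)) (Function.update z j b) := by
      funext z; rw [happ z]
    calc |smooth δ (fun z => h (applyR π z)) x - smooth δ h (applyR π x)|
        ≤ |smooth δ (fun z => h (applyR π z)) x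
            - smooth δ (fun w => h (applyR π' w)) (Function.update x j b)|
          + |smooth δ (fun w => h (applyR π' w)) (Function.update x j b)
            - smooth δ h (applyR π x)| := abs_sub_le _ _ _
      _ ≤ δ + δ * m := by
          gcongr
          · rw [e1]
            exact single_coord δ h0 h1 (fun w => h (applyR π' w)) hh' j b x
          · rw [show applyR π x = applyR π' (Function.update x j b) from happ x]
            exact ih π' hsize h hh (Function.update x j b)
      _ = δ * (m + 1) := by ring
      _ = δ * (m + 1 : ℕ) := by push_cast; ring

lemma pointwise (h0 : 0 ≤ δ) (h1 : δ ≤ 1) (π : Fin n → Option Bool)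
    (h : (Fin n → Bool) → ℝ) (hh : ∀ y, |h y| ≤ 1) (x : Fin n → Bool) :
    |smooth δ (fun z => h (applyR π z)) x - smooth δ h (applyR π x)| ≤ δ * rsize π :=
  pointwise_aux δ h0 h1 (rsize π) π rfl h hh x

end W

lemma infl_close {n : ℕ} (u v : (Fin n → Bool) → ℝ) (i : Fin n) (ε : ℝ) (hε : 0 ≤ ε)
    (hp : ∀ x, |u x - v x| ≤ ε) : |inflR u i - inflR v i| ≤ 2 * ε := by
  unfold inflR
  rw [div_sub_div_same, ← Finset.sum_sub_distrib, abs_div,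
    abs_of_pos (by positivity : (0:ℝ) < 2 ^ n), div_le_iff₀ (by positivity : (0:ℝ) < 2 ^ n)]
  calc |∑ x : Fin n → Bool,
        ((|u x - u (Function.update x i true)| + |u x - u (Function.update x i false)|) / 2
        - (|v x - v (Function.update x i true)| + |v x - v (Function.update x i false)|) / 2)|
      ≤ ∑ x : Fin n → Bool,
        |(|u x - u (Function.update x i true)| + |u x - u (Function.update x i false)|) / 2
        - (|v x - v (Function.update x i true)| + |v x - v (Function.update x i false)|) / 2| :=
        Finset.abs_sum_le_sum_abs _ _
    _ ≤ ∑ _x : Fin n → Bool, 2 * ε := by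
        refine Finset.sum_le_sum fun x _ => ?_
        set xt := Function.update x i true
        set xf := Function.update x i false
        have h1 : |(|u x - u xt| - |v x - v xt|)| ≤ |u x - v x| + |u xt - v xt| := by
          refine (abs_abs_sub_abs_le_abs_sub _ _).trans ?_
          rw [show u x - u xt - (v x - v xt) = (u x - v x) - (u xt - v xt) by ring]
          exact (abs_sub _ _)
        have h2 : |(|u x - u xf| - |v x - v xf|)| ≤ |u x - v x| + |u xf - v xf| := by
          refine (abs_abs_sub_abs_le_abs_sub _ _).trans ?_
          rw [show u x - u xf - (v x - v xf) = (u x - v x) - (u xf - v xf) by ring]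
          exact (abs_sub _ _)
        have e : (|u x - u xt| + |u x - u xf|) / 2 - (|v x - v xt| + |v x - v xf|) / 2
            = ((|u x - u xt| - |v x - v xt|) + (|u x - u xf| - |v x - v xf|)) / 2 := by ring
        rw [e, abs_div, abs_of_pos (by norm_num : (0:ℝ) < 2), div_le_iff₀ (by norm_num : (0:ℝ) < 2)]
        have h3 := abs_add_le (|u x - u xt| - |v x - v xt|) (|u x - u xf| - |v x - v xf|)
        have p1 := hp x; have p2 := hp xt; have p3 := hp xf
        have := abs_le.1 p1
        nlinarith [abs_nonneg (u x - v x)]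
    _ = 2 ^ n * (2 * ε) := by
        rw [Finset.sum_const, nsmul_eq_mul]
        congr 1
        simp [Fintype.card_fun]
    _ = 2 * ε * 2 ^ n := by ring


/-- **Influences under smoothing and restricting are close.** For `f : {-1,1}^n → {-1,1}`,
`δ ∈ [0,1]`, a restriction `π`, and a coordinate `i` not fixed by `π`,
`|Inf_i((f_π)_δ) − Inf_i((f_δ)_π)| ≤ 2δ·|π|`. -/
theorem stmt17 {n : ℕ} (f : (Fin n → Bool) → Bool) (δ : ℝ) (hδ0 : 0 ≤ δ) (hδ1 : δ ≤ 1)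
    (π : Fin n → Option Bool) (i : Fin n) (hi : π i = none) :
    |inflR (smooth δ fun z => bval (f (applyR π z))) i
        - inflR (fun x => smooth δ (fun z => bval (f z)) (applyR π x)) i|
      ≤ 2 * δ * rsize π := by
  have hh : ∀ y : Fin n → Bool, |bval (f y)| ≤ 1 := by
    intro y; unfold bval; split <;> norm_num
  have hp : ∀ x, |smooth δ (fun z => bval (f (applyR π z))) x
      - (fun x => smooth δ (fun z => bval (f z)) (applyR π x)) x| ≤ δ * rsize π := by
    intro x
    exact pointwise δ hδ0 hδ1 π (fun z => bval (f z)) hh x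
  have := infl_close (smooth δ fun z => bval (f (applyR π z)))
    (fun x => smooth δ (fun z => bval (f z)) (applyR π x)) i (δ * rsize π)
    (by positivity) hp
  calc _ ≤ 2 * (δ * rsize π) := this
    _ = 2 * δ * rsize π := by ring
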